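/- For any ordered index sequences 1 ≤ i_1 < ⋯ < i_{k−1} ≤ n and 1 ≤ j_1 < ⋯ < j_{k+1} ≤ n and any matrix B ∈ ℝ^{n × k}, the Plücker relation holds: ∑_{ℓ=1}^{k+1} (−1)^ℓ · B_{i_1,…,i_{k−1},j_ℓ} · B_{j_1,…,ĵ_ℓ,…,j_{k+1}} = 0, where B_{a_1,…,a_k} denotes the determinant of the k×k submatrix of B with rows a_1,…,a_k, and ĵ_ℓ means j_ℓ is omitted. -/

import Mathlib

/-!
Expanding `B_{i₁,…,i_k,j_ℓ}` along its last row writes it as `∑_m B_{j_ℓ,m} c_m` with cofactors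
`c_m` that do not depend on `ℓ`. The relation then becomes `∑_m c_m ∑_ℓ (-1)^ℓ B_{j_ℓ,m} B_{ĵ_ℓ}`,
and each inner sum is the first-column expansion of the determinant of the rows `j` of `B`
with its `m`-th column repeated in front, hence vanishes.
-/

namespace Matrix

variable {R ι : Type*} [CommRing R] {k : ℕ}

theorem det_submatrix_snoc_eq_sum (B : Matrix ι (Fin (k + 1)) R) (i : Fin k → ι) (r : ι) :
    (B.submatrix (Fin.snoc i r : Fin (k + 1) → ι) id).det =
      ∑ m : Fin (k + 1), (-1) ^ (k + m : ℕ) * B r m * (B.submatrix i m.succAbove).det := by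
  rw [det_succ_row _ (Fin.last k)]
  refine Finset.sum_congr rfl fun m _ => ?_
  congr 2
  · simp
  · ext a b
    simp [Fin.succAbove_last]

theorem sum_neg_one_pow_mul_det_submatrix_succAbove_eq_zero
    (A : Matrix (Fin (k + 2)) (Fin (k + 1)) R) (m : Fin (k + 1)) :
    ∑ l : Fin (k + 2), (-1) ^ (l : ℕ) * A l m * (A.submatrix l.succAbove id).det = 0 := by
  let M : Matrix (Fin (k + 2)) (Fin (k + 2)) R := of fun l => Fin.cons (A l m) (A l)
  have hM : M.det = 0 :=
    det_zero_of_column_eq (Fin.succ_ne_zero m).symm fun l => by simp [M]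
  rw [← hM, det_succ_column_zero]
  refine Finset.sum_congr rfl fun l _ => ?_
  congr 2

end Matrix

open Matrix in
theorem stmt5_general (n k : ℕ) (B : Matrix (Fin n) (Fin (k + 1)) ℝ)
    (i : Fin k → Fin n) (j : Fin (k + 2) → Fin n) :
    ∑ l : Fin (k + 2), (-1 : ℝ) ^ (l : ℕ) *
        (B.submatrix (Fin.snoc i (j l) : Fin (k + 1) → Fin n) id).det *
        (B.submatrix (j ∘ l.succAbove) id).det = 0 := by
  set c : Fin (k + 1) → ℝ := fun m => (-1) ^ (k + m : ℕ) * (B.submatrix i m.succAbove).det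
  calc _ = ∑ m, c m * ∑ l : Fin (k + 2), (-1) ^ (l : ℕ) * B (j l) m *
          (B.submatrix (j ∘ l.succAbove) id).det := by
        simp_rw [det_submatrix_snoc_eq_sum, Finset.mul_sum, Finset.sum_mul]
        rw [Finset.sum_comm]
        refine Finset.sum_congr rfl fun m _ => Finset.sum_congr rfl fun l _ => ?_
        ring
    _ = 0 := Finset.sum_eq_zero fun m _ => by
        rw [← mul_zero (c m),
          ← sum_neg_one_pow_mul_det_submatrix_succAbove_eq_zero (B.submatrix j id) m]
        rfl

/-- Plücker relations for the maximal minors of `B ∈ ℝ^{n × (k+1)}`: for ordered row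
sequences `i₁ < ⋯ < i_k` and `j₁ < ⋯ < j_{k+2}`,
`∑_ℓ (-1)^ℓ B_{i₁,…,i_k,j_ℓ} · B_{j₁,…,ĵ_ℓ,…,j_{k+2}} = 0`, where `B_{a₁,…}` denotes
the determinant of the square submatrix of `B` with the indicated rows. -/
theorem stmt5 (n k : ℕ) (B : Matrix (Fin n) (Fin (k + 1)) ℝ)
    (i : Fin k → Fin n) (j : Fin (k + 2) → Fin n)
    (hi : StrictMono i) (hj : StrictMono j) :
    ∑ l : Fin (k + 2), (-1 : ℝ) ^ (l : ℕ) *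
        (B.submatrix (Fin.snoc i (j l) : Fin (k + 1) → Fin n) id).det *
        (B.submatrix (j ∘ l.succAbove) id).det = 0 :=
  stmt5_general n k B i j
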